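/- Suppose Λₙ : [t₀, T] → ℝ is a sequence of continuous functions with Λₙ(t) ≥ 2, satisfying Λₙ(t) ≤ C + C(T) ∫_{t₀}^{t} Λₙ₋₁(s)³ log(Λₙ₋₁(s)) ds for all n ≥ 1, where Λ₀ is bounded by some constant B ≥ 2. Then there exists T' ∈ (t₀, T] and a constant B' such that Λₙ(t) ≤ B' for all n and all t ∈ [t₀, T']. -/
import Mathlib


open MeasureTheory intervalIntegral

/-- Uniform-in-`n` boundedness of the iterates: if `Λₙ ≥ 2` are continuous and satisfy the
iterated Gronwall inequality `Λₙ t ≤ C + K ∫_{t₀}^t Λₙ₋₁³ log Λₙ₋₁`, with `Λ₀ ≤ B`, then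
there are `T' ∈ (t₀, T]` and `B'` with `Λₙ ≤ B'` on `[t₀, T']` for all `n`. -/
theorem iterates_uniformly_bounded (t₀ T : ℝ) (ht : t₀ < T)
    (Λ : ℕ → ℝ → ℝ) (C K B : ℝ) (hC : 0 < C) (hK : 0 < K) (hB : 2 ≤ B)
    (hcont : ∀ n, ContinuousOn (Λ n) (Set.Icc t₀ T))
    (hge2 : ∀ n, ∀ t ∈ Set.Icc t₀ T, 2 ≤ Λ n t)
    (h0 : ∀ t ∈ Set.Icc t₀ T, Λ 0 t ≤ B)
    (hrec : ∀ n, 1 ≤ n → ∀ t ∈ Set.Icc t₀ T,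
      Λ n t ≤ C + K * ∫ s in t₀..t, Λ (n - 1) s ^ 3 * Real.log (Λ (n - 1) s)) :
    ∃ T' ∈ Set.Ioc t₀ T, ∃ B' : ℝ,
      ∀ n, ∀ t ∈ Set.Icc t₀ T', Λ n t ≤ B' := by
  set B' := B + C with hB'def
  have hB'2 : 2 ≤ B' := by linarith
  have hlog : 0 < Real.log B' := Real.log_pos (by linarith)
  have hM : 0 < B' ^ 3 * Real.log B' := by positivity
  set ε := min (T - t₀) (B / (K * (B' ^ 3 * Real.log B'))) with hεdef
  have hε : 0 < ε := lt_min (by linarith) (by positivity)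
  have hεT : t₀ + ε ≤ T := by
    have := min_le_left (T - t₀) (B / (K * (B' ^ 3 * Real.log B')))
    simp only [← hεdef] at this; linarith
  have hεB : K * (ε * (B' ^ 3 * Real.log B')) ≤ B := by
    have h1 : ε ≤ B / (K * (B' ^ 3 * Real.log B')) := min_le_right _ _
    have h2 : 0 < K * (B' ^ 3 * Real.log B') := by positivity
    calc K * (ε * (B' ^ 3 * Real.log B')) = ε * (K * (B' ^ 3 * Real.log B')) := by ring
    _ ≤ (B / (K * (B' ^ 3 * Real.log B'))) * (K * (B' ^ 3 * Real.log B')) :=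
        mul_le_mul_of_nonneg_right h1 h2.le
    _ = B := by field_simp
  have hsub : Set.Icc t₀ (t₀ + ε) ⊆ Set.Icc t₀ T := Set.Icc_subset_Icc le_rfl hεT
  refine ⟨t₀ + ε, ⟨by linarith, hεT⟩, B', ?_⟩
  intro n
  induction n with
  | zero =>
    intro t ht'
    exact le_trans (h0 t (hsub ht')) (by linarith)
  | succ n ih =>
    intro t ht'
    have htT : t ∈ Set.Icc t₀ T := hsub ht'
    have hrec' := hrec (n + 1) (Nat.le_add_left 1 n) t htT
    simp only [Nat.add_sub_cancel] at hrec'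
    have hcontf : ContinuousOn (fun s => Λ n s ^ 3 * Real.log (Λ n s)) (Set.Icc t₀ T) := by
      refine ContinuousOn.mul (ContinuousOn.pow (hcont n) 3) ?_
      exact (hcont n).log (fun s hs => by have := hge2 n s hs; linarith)
    have huIcc : Set.uIcc t₀ t ⊆ Set.Icc t₀ T := by
      rw [Set.uIcc_of_le ht'.1]
      exact Set.Icc_subset_Icc le_rfl htT.2
    have hint : IntervalIntegrable (fun s => Λ n s ^ 3 * Real.log (Λ n s)) volume t₀ t :=
      (hcontf.mono huIcc).intervalIntegrable
    have hbound : ∀ s ∈ Set.Icc t₀ t,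
        Λ n s ^ 3 * Real.log (Λ n s) ≤ B' ^ 3 * Real.log B' := by
      intro s hs
      have hs' : s ∈ Set.Icc t₀ (t₀ + ε) := ⟨hs.1, le_trans hs.2 ht'.2⟩
      have h2s := hge2 n s (hsub hs')
      have hub := ih s hs'
      have hlogs : 0 ≤ Real.log (Λ n s) := Real.log_nonneg (by linarith)
      exact mul_le_mul (pow_le_pow_left₀ (by linarith) hub 3)
        (Real.log_le_log (by linarith) hub) hlogs (by positivity)
    have hIle : (∫ s in t₀..t, Λ n s ^ 3 * Real.log (Λ n s))
        ≤ ε * (B' ^ 3 * Real.log B') := by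
      calc (∫ s in t₀..t, Λ n s ^ 3 * Real.log (Λ n s))
          ≤ ∫ _s in t₀..t, B' ^ 3 * Real.log B' := by
            apply intervalIntegral.integral_mono_on ht'.1 hint intervalIntegrable_const
            exact hbound
        _ = (t - t₀) * (B' ^ 3 * Real.log B') := by
            rw [intervalIntegral.integral_const, smul_eq_mul]
        _ ≤ ε * (B' ^ 3 * Real.log B') := by
            have : t - t₀ ≤ ε := by have := ht'.2; linarith
            exact mul_le_mul_of_nonneg_right this hM.le
    calc Λ (n + 1) t ≤ C + K * ∫ s in t₀..t, Λ n s ^ 3 * Real.log (Λ n s) := hrec'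
      _ ≤ C + K * (ε * (B' ^ 3 * Real.log B')) := by
          have := mul_le_mul_of_nonneg_left hIle hK.le; linarith
      _ ≤ C + B := by linarith
      _ = B' := by rw [hB'def]; ring
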